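/- The constant a* = 1/18 is best possible in the inequality Γ(x+1) < √(2π)·x^x·e^{−x}·(x² + x/3 + a*)^{1/4} for x ≥ 1; equivalently, the limit as x → ∞ of (Γ(x+1)/(√(2π)·x^x·e^{−x}))⁴ − x² − x/3 equals 1/18. -/

import Mathlib

/-!
Write `Γ(x + 1) = √(2π) x^(x + 1/2) e^(-x) e^(μ x)`, with `μ = stirlingRemainder`. The functional
equation of `Γ` gives
`μ x - μ (x + 1) = (x + 1/2) log (1 + 1/x) - 1 = ∑_{k ≥ 0} (2x + 1)^(-2k-2) / (2k + 3)`.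
Bounding this series above by a geometric series and below by its first term, and telescoping
with `μ (x + n) → 0` (Stirling's formula combined with Euler's limit formula for `Γ`), gives
`1/(12x) - 1/(144x³) ≤ μ x ≤ 1/(12x)`. Hence `x² · 4μ x = x/3 + O(1/x)`, and the quantity in the
theorem is `x² e^(4μ x) - x² - x/3`, whose limit is `(1/3)²/2 = 1/18` by expanding the exponential
to second order.
-/

open Filter Real Topology

theorem le_of_forall_sub_add_one_le {f g : ℝ → ℝ} {x : ℝ}
    (hstep : ∀ n : ℕ, f (x + n) - f (x + n + 1) ≤ g (x + n) - g (x + n + 1))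
    (hf : Tendsto (fun n : ℕ => f (x + n)) atTop (𝓝 0))
    (hg : Tendsto (fun n : ℕ => g (x + n)) atTop (𝓝 0)) :
    f x ≤ g x := by
  have hanti : Antitone (fun n : ℕ => g (x + n) - f (x + n)) := by
    refine antitone_nat_of_succ_le fun n => ?_
    have := hstep n
    simp only [Nat.cast_succ, ← add_assoc]
    linarith
  have hnonneg := hanti.le_of_tendsto (by simpa using hg.sub hf) 0
  simpa using hnonneg

theorem tendsto_one_div_const_mul_pow_add_nat (x c : ℝ) {k : ℕ} (hk : k ≠ 0) :
    Tendsto (fun n : ℕ => 1 / (c * (x + n) ^ k)) atTop (𝓝 0) := by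
  have hpow : Tendsto (fun n : ℕ => (x + n) ^ k) atTop atTop :=
    (tendsto_pow_atTop hk).comp (tendsto_atTop_add_const_left _ x tendsto_natCast_atTop_atTop)
  simpa [mul_inv, mul_comm] using (tendsto_inv_atTop_zero.comp hpow).const_mul c⁻¹

theorem hasSum_mul_log_one_add_inv_sub_one {x : ℝ} (hx : 0 < x) :
    HasSum (fun k : ℕ => 1 / (2 * k + 3) * (1 / (2 * x + 1)) ^ (2 * k + 2))
      ((x + 1 / 2) * log (1 + x⁻¹) - 1) := by
  have hseries : HasSum (fun k : ℕ => 1 / (2 * k + 1) * (1 / (2 * x + 1)) ^ (2 * k))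
      ((x + 1 / 2) * log (1 + x⁻¹)) :=
    ((hasSum_log_one_add_inv hx).mul_left (x + 1 / 2)).congr_fun fun k => by
      rw [pow_succ]
      field_simp
  have htail := (hasSum_nat_add_iff' 1).mpr hseries
  rw [Finset.sum_range_one, Nat.cast_zero, mul_zero, zero_add, pow_zero, div_one, mul_one] at htail
  exact htail.congr_fun fun k => by push_cast; ring_nf

theorem mul_log_one_add_inv_sub_one_le {x : ℝ} (hx : 0 < x) :
    (x + 1 / 2) * log (1 + x⁻¹) - 1 ≤ 1 / (12 * x) - 1 / (12 * (x + 1)) := by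
  set r := (1 / (2 * x + 1)) ^ 2 with hr
  have hr_lt_one : r < 1 := by
    rw [hr, div_pow, one_pow, div_lt_one (by positivity)]
    nlinarith
  have hgeom : HasSum (fun k : ℕ => 1 / 3 * r ^ (k + 1)) (1 / 3 * r * (1 - r)⁻¹) :=
    ((hasSum_geometric_of_lt_one (by positivity) hr_lt_one).mul_left (1 / 3 * r)).congr_fun
      fun k => by ring
  calc (x + 1 / 2) * log (1 + x⁻¹) - 1 ≤ 1 / 3 * r * (1 - r)⁻¹ := by
        refine hasSum_le (fun k => ?_) (hasSum_mul_log_one_add_inv_sub_one hx) hgeom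
        rw [hr, ← pow_mul, mul_add_one]
        gcongr
        linarith [k.cast_nonneg (α := ℝ)]
    _ = 1 / (12 * x) - 1 / (12 * (x + 1)) := by
        have : 1 - r = 4 * x * (x + 1) / (2 * x + 1) ^ 2 := by
          rw [hr]; field_simp; ring
        rw [this, hr]
        field_simp
        ring

theorem le_mul_log_one_add_inv_sub_one {x : ℝ} (hx : 0 < x) :
    (1 / (12 * x) - 1 / (144 * x ^ 3)) - (1 / (12 * (x + 1)) - 1 / (144 * (x + 1) ^ 3))
      ≤ (x + 1 / 2) * log (1 + x⁻¹) - 1 := by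
  have hfirst := le_hasSum (hasSum_mul_log_one_add_inv_sub_one hx) 0 (fun k _ => by positivity)
  refine le_trans (le_of_sub_nonneg ?_) hfirst
  have hdiff : 1 / (2 * ((0 : ℕ) : ℝ) + 3) * (1 / (2 * x + 1)) ^ (2 * 0 + 2)
      - ((1 / (12 * x) - 1 / (144 * x ^ 3)) - (1 / (12 * (x + 1)) - 1 / (144 * (x + 1) ^ 3)))
      = (21 * x ^ 2 + 21 * x + 3) / (432 * x ^ 3 * (x + 1) ^ 3 * (2 * x + 1) ^ 2) := by
    norm_num
    field_simp
    ring
  rw [hdiff]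
  positivity

theorem tendsto_add_mul_log_one_add_div (x : ℝ) :
    Tendsto (fun n : ℕ => (x + n + 1 / 2) * log (1 + x / n)) atTop (𝓝 x) := by
  have hmul : Tendsto (fun n : ℕ => n * log (1 + x / n)) atTop (𝓝 x) :=
    (tendsto_mul_log_one_add_div_atTop x).comp tendsto_natCast_atTop_atTop
  have hlog : Tendsto (fun n : ℕ => log (1 + x / n)) atTop (𝓝 0) :=
    (hmul.div_atTop tendsto_natCast_atTop_atTop).congr' <| by
      filter_upwards [eventually_ne_atTop 0] with n hn
      field_simp
  convert (hlog.const_mul (x + 1 / 2)).add hmul using 2 <;> ring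

theorem abs_exp_sub_one_sub_id_sub_sq_div_two_le {a : ℝ} (ha : |a| ≤ 1) :
    |exp a - 1 - a - a ^ 2 / 2| ≤ |a| ^ 3 := by
  have h := exp_bound ha (n := 3) (by norm_num)
  norm_num [Finset.sum_range_succ, Nat.factorial] at h
  calc |exp a - 1 - a - a ^ 2 / 2| = |exp a - (1 + a + a ^ 2 / 2)| := by ring_nf
    _ ≤ |a| ^ 3 * (2 / 9) := h
    _ ≤ |a| ^ 3 := by nlinarith [pow_nonneg (abs_nonneg a) 3]

theorem tendsto_sq_mul_exp_sub_sq_sub {a : ℝ → ℝ} {c d : ℝ}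
    (h : Tendsto (fun x => x ^ 2 * a x - c * x) atTop (𝓝 d)) :
    Tendsto (fun x => x ^ 2 * exp (a x) - x ^ 2 - c * x) atTop (𝓝 (d + c ^ 2 / 2)) := by
  have hxa : Tendsto (fun x => x * a x) atTop (𝓝 c) := by
    have := (h.div_atTop tendsto_id).add_const c
    rw [zero_add] at this
    refine this.congr' ?_
    filter_upwards [eventually_ne_atTop 0] with x hx
    simp only [id]
    field_simp
    ring
  have ha : Tendsto a atTop (𝓝 0) :=
    (hxa.div_atTop tendsto_id).congr' <| by
      filter_upwards [eventually_ne_atTop 0] with x hx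
      simp only [id]
      field_simp
  have hrem : Tendsto (fun x => x ^ 2 * (exp (a x) - 1 - a x - a x ^ 2 / 2)) atTop (𝓝 0) := by
    have hbound : Tendsto (fun x => (x * a x) ^ 2 * |a x|) atTop (𝓝 0) := by
      simpa using (hxa.pow 2).mul ha.abs
    refine squeeze_zero_norm' ?_ hbound
    filter_upwards [ha.eventually (Metric.closedBall_mem_nhds 0 one_pos)] with x hx
    rw [dist_zero_right, norm_eq_abs] at hx
    rw [norm_mul, norm_pow, norm_eq_abs, norm_eq_abs, sq_abs]
    calc x ^ 2 * |exp (a x) - 1 - a x - a x ^ 2 / 2| ≤ x ^ 2 * |a x| ^ 3 := by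
          gcongr
          exact abs_exp_sub_one_sub_id_sub_sq_div_two_le hx
      _ = (x * a x) ^ 2 * |a x| := by
          rw [mul_pow, ← sq_abs (a x)]
          ring
  -- `x² eᵃ - x² - c x = x² (eᵃ - 1 - a - a²/2) + (x² a - c x) + (x a)² / 2`
  have hsum := (hrem.add h).add ((hxa.pow 2).div_const 2)
  rw [zero_add] at hsum
  refine hsum.congr fun x => ?_
  ring

noncomputable def stirlingRemainder (x : ℝ) : ℝ :=
  log (Gamma (x + 1)) - (x + 1 / 2) * log x + x - log √(2 * π)

theorem stirlingRemainder_sub_stirlingRemainder_add_one {x : ℝ} (hx : 0 < x) :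
    stirlingRemainder x - stirlingRemainder (x + 1) = (x + 1 / 2) * log (1 + x⁻¹) - 1 := by
  have hG : Gamma (x + 1 + 1) = (x + 1) * Gamma (x + 1) := Gamma_add_one (by positivity)
  have hlog : log (1 + x⁻¹) = log (x + 1) - log x := by
    rw [← log_div (by positivity) hx.ne', add_div, div_self hx.ne', one_div]
  rw [stirlingRemainder, stirlingRemainder, hG,
    log_mul (by positivity) (Gamma_pos_of_pos (by positivity)).ne', hlog]
  ring

theorem tendsto_log_Gamma_add_nat_sub {x : ℝ} (hx : 0 < x) :
    Tendsto (fun n : ℕ => log (Gamma (x + n + 1)) - log (Gamma (n + 1)) - x * log n)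
      atTop (𝓝 0) := by
  have hfeq : ∀ {y : ℝ}, 0 < y → (log ∘ Gamma) (y + 1) = (log ∘ Gamma) y + log y := fun hy => by
    rw [Function.comp_apply, Gamma_add_one hy.ne', log_mul hy.ne' (Gamma_pos_of_pos hy).ne',
      add_comm, Function.comp_apply]
  have hEuler : ∀ n : ℕ, log (Gamma (x + n + 1)) - log (Gamma (n + 1)) - x * log n
      = log (Gamma x) - BohrMollerup.logGammaSeq x n := fun n => by
    have := BohrMollerup.f_add_nat_eq hfeq hx (n + 1)
    simp only [Function.comp_apply, Nat.cast_add_one, ← add_assoc] at this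
    rw [this, BohrMollerup.logGammaSeq, Gamma_nat_eq_factorial]
    ring
  simp only [hEuler]
  simpa using (tendsto_const_nhds (x := log (Gamma x))).sub (BohrMollerup.tendsto_log_gamma hx)

theorem stirlingRemainder_natCast {n : ℕ} (hn : n ≠ 0) :
    stirlingRemainder n = log (Stirling.stirlingSeq n) - log √π := by
  have hn0 : (0 : ℝ) < n := by positivity
  rw [stirlingRemainder, Stirling.log_stirlingSeq_formula, Gamma_nat_eq_factorial,
    log_div hn0.ne' (exp_pos 1).ne', log_exp, log_sqrt (by positivity), log_sqrt (by positivity),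
    log_mul two_ne_zero pi_pos.ne', log_mul two_ne_zero hn0.ne']
  ring

theorem tendsto_stirlingRemainder_natCast :
    Tendsto (fun n : ℕ => stirlingRemainder n) atTop (𝓝 0) := by
  have hlog := Stirling.tendsto_stirlingSeq_sqrt_pi.log (sqrt_pos.mpr pi_pos).ne'
  refine (sub_self (log √π) ▸ hlog.sub_const (log √π)).congr' ?_
  filter_upwards [eventually_ne_atTop 0] with n hn
  exact (stirlingRemainder_natCast hn).symm

theorem tendsto_stirlingRemainder_add_nat {x : ℝ} (hx : 0 < x) :
    Tendsto (fun n : ℕ => stirlingRemainder (x + n)) atTop (𝓝 0) := by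
  have hlim := ((tendsto_log_Gamma_add_nat_sub hx).add tendsto_stirlingRemainder_natCast).add
    ((tendsto_const_nhds (x := x)).sub (tendsto_add_mul_log_one_add_div x))
  rw [add_zero, zero_add, sub_self] at hlim
  refine hlim.congr' ?_
  filter_upwards [eventually_ne_atTop 0] with n hn
  have hn0 : (0 : ℝ) < n := by positivity
  have hlog : log (1 + x / n) = log (x + n) - log n := by
    rw [← log_div (by positivity) hn0.ne', add_div, div_self hn0.ne', add_comm]
  rw [hlog, stirlingRemainder, stirlingRemainder]
  ring

theorem stirlingRemainder_le {x : ℝ} (hx : 0 < x) : stirlingRemainder x ≤ 1 / (12 * x) := by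
  refine le_of_forall_sub_add_one_le (g := fun y => 1 / (12 * y)) (fun n => ?_)
    (tendsto_stirlingRemainder_add_nat hx) ?_
  · rw [stirlingRemainder_sub_stirlingRemainder_add_one (by positivity)]
    exact mul_log_one_add_inv_sub_one_le (by positivity)
  · simpa using tendsto_one_div_const_mul_pow_add_nat x 12 one_ne_zero

theorem le_stirlingRemainder {x : ℝ} (hx : 0 < x) :
    1 / (12 * x) - 1 / (144 * x ^ 3) ≤ stirlingRemainder x := by
  refine le_of_forall_sub_add_one_le (f := fun y => 1 / (12 * y) - 1 / (144 * y ^ 3))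
    (fun n => ?_) ?_ (tendsto_stirlingRemainder_add_nat hx)
  · rw [stirlingRemainder_sub_stirlingRemainder_add_one (by positivity)]
    exact le_mul_log_one_add_inv_sub_one (by positivity)
  · simpa using (tendsto_one_div_const_mul_pow_add_nat x 12 one_ne_zero).sub
      (tendsto_one_div_const_mul_pow_add_nat x 144 three_ne_zero)

theorem tendsto_sq_mul_four_mul_stirlingRemainder_sub :
    Tendsto (fun x => x ^ 2 * (4 * stirlingRemainder x) - 1 / 3 * x) atTop (𝓝 0) := by
  have hlower : Tendsto (fun x : ℝ => -(1 / 36) / x) atTop (𝓝 0) :=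
    tendsto_const_nhds.div_atTop tendsto_id
  refine tendsto_of_tendsto_of_tendsto_of_le_of_le' hlower tendsto_const_nhds ?_ ?_
  all_goals filter_upwards [eventually_gt_atTop 0] with x hx
  · have := le_stirlingRemainder hx
    have hx2 : x ^ 2 * (4 * (1 / (12 * x) - 1 / (144 * x ^ 3))) = 1 / 3 * x + -(1 / 36) / x := by
      field_simp
      ring
    nlinarith [mul_le_mul_of_nonneg_left this (sq_nonneg x)]
  · have := stirlingRemainder_le hx
    have hx2 : x ^ 2 * (1 / (12 * x)) = 1 / 12 * x := by
      field_simp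
    nlinarith [mul_le_mul_of_nonneg_left this (sq_nonneg x)]

theorem Gamma_div_stirling_pow_four {x : ℝ} (hx : 0 < x) :
    (Gamma (x + 1) / (√(2 * π) * x ^ x * exp (-x))) ^ 4 = x ^ 2 * exp (4 * stirlingRemainder x) := by
  have hratio : Gamma (x + 1) / (√(2 * π) * x ^ x * exp (-x))
      = exp (stirlingRemainder x + log x / 2) := by
    have hpos : 0 < Gamma (x + 1) / (√(2 * π) * x ^ x * exp (-x)) := by
      have := Gamma_pos_of_pos (show 0 < x + 1 by positivity)
      positivity
    rw [← exp_log hpos, stirlingRemainder, log_div (Gamma_pos_of_pos (by positivity)).ne'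
      (by positivity), log_mul (by positivity) (exp_pos _).ne', log_mul (by positivity)
      (by positivity), log_rpow hx, log_exp]
    ring_nf
  rw [hratio, ← exp_nat_mul, show ((4 : ℕ) : ℝ) * (stirlingRemainder x + log x / 2)
    = 4 * stirlingRemainder x + (2 : ℕ) * log x by push_cast; ring, exp_add, exp_nat_mul,
    exp_log hx, mul_comm]

theorem stmt_11 :
    Tendsto (fun x : ℝ =>
      (Real.Gamma (x + 1) / (Real.sqrt (2 * Real.pi) * x ^ x * Real.exp (-x)))^4
        - x^2 - x/3) atTop (nhds (1/18)) := by
  have h := tendsto_sq_mul_exp_sub_sq_sub tendsto_sq_mul_four_mul_stirlingRemainder_sub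
  rw [show (0 : ℝ) + (1 / 3) ^ 2 / 2 = 1 / 18 by norm_num] at h
  refine h.congr' ?_
  filter_upwards [eventually_gt_atTop 0] with x hx
  rw [Gamma_div_stirling_pow_four hx]
  ring
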